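/- arXiv:1112.4863 — 5 statements merged into one kernel-verified Lean document; each statement's English description precedes it below -/
import Mathlib

section
/- If for every pair of (D−1)-dimensional linear subspaces L₁, L₂ ⊂ ℝ^D there exists a data point x_i lying in neither L₁ nor L₂, then F(Q) = Σ_{i=1}^N ‖Q x_i‖ is strictly convex on the set H = {Q ∈ ℝ^{D×D} : Q = Qᵀ, tr(Q) = 1}. -/
open Matrix Finset

/-- Euclidean norm of a vector in `ℝ^D`. -/
noncomputable def euclNorm {D : ℕ} (v : Fin D → ℝ) : ℝ := Real.sqrt (∑ j, v j ^ 2)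

private lemma euclNorm_eq_norm {D : ℕ} (v : Fin D → ℝ) :
    euclNorm v = ‖(WithLp.equiv 2 (Fin D → ℝ)).symm v‖ := by
  rw [EuclideanSpace.norm_eq]
  unfold euclNorm
  congr 1
  refine Finset.sum_congr rfl fun j _ => ?_
  rw [Real.norm_eq_abs, sq_abs]
  rfl

private lemma WithLp.equiv_symm_add {D : ℕ} (y z : Fin D → ℝ) :
    (WithLp.equiv 2 (Fin D → ℝ)).symm (y + z) =
      (WithLp.equiv 2 (Fin D → ℝ)).symm y + (WithLp.equiv 2 (Fin D → ℝ)).symm z := rfl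

private lemma WithLp.equiv_symm_smul {D : ℕ} (c : ℝ) (y : Fin D → ℝ) :
    (WithLp.equiv 2 (Fin D → ℝ)).symm (c • y) = c • (WithLp.equiv 2 (Fin D → ℝ)).symm y := rfl

private lemma WithLp.equiv_smul {D : ℕ} (c : ℝ) (y : WithLp 2 (Fin D → ℝ)) :
    WithLp.equiv 2 (Fin D → ℝ) (c • y) = c • WithLp.equiv 2 (Fin D → ℝ) y := rfl

private lemma WithLp.equiv_zero {D : ℕ} :
    WithLp.equiv 2 (Fin D → ℝ) 0 = 0 := rfl

/-- The dot product with `w` as a linear functional. -/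
private noncomputable def dotLin {D : ℕ} (w : Fin D → ℝ) : (Fin D → ℝ) →ₗ[ℝ] ℝ where
  toFun v := w ⬝ᵥ v
  map_add' y z := dotProduct_add w y z
  map_smul' c y := by simp [dotProduct_smul]

private lemma finrank_ker_dotLin {D : ℕ} (w : Fin D → ℝ) (hw : w ≠ 0) :
    Module.finrank ℝ (LinearMap.ker (dotLin w)) = D - 1 := by
  have hww : w ⬝ᵥ w ≠ 0 := fun h => hw (dotProduct_self_eq_zero.mp h)
  have hsurj : Function.Surjective (dotLin w) := by
    intro r
    refine ⟨(r / (w ⬝ᵥ w)) • w, ?_⟩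
    show w ⬝ᵥ ((r / (w ⬝ᵥ w)) • w) = r
    rw [dotProduct_smul, smul_eq_mul]
    field_simp
  have h2 := LinearMap.finrank_range_add_finrank_ker (dotLin w)
  rw [LinearMap.range_eq_top.mpr hsurj, finrank_top, Module.finrank_self,
    Module.finrank_fin_fun] at h2
  omega

private lemma symm_dot {D : ℕ} {M : Matrix (Fin D) (Fin D) ℝ} (h : M.IsSymm)
    (y z : Fin D → ℝ) : M.mulVec y ⬝ᵥ z = y ⬝ᵥ M.mulVec z := by
  rw [dotProduct_mulVec, ← mulVec_transpose, h]

/-- If for every pair of `(D-1)`-dimensional linear subspaces `L₁, L₂ ⊂ ℝ^D` there is a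
data point lying in neither, then `F(Q) = Σᵢ ‖Q xᵢ‖` is strictly convex on
`H = {Q : Q = Qᵀ, tr Q = 1}`. -/
theorem stmt1 {D N : ℕ} (x : Fin N → Fin D → ℝ)
    (hcond : ∀ L₁ L₂ : Submodule ℝ (Fin D → ℝ),
      Module.finrank ℝ L₁ = D - 1 → Module.finrank ℝ L₂ = D - 1 →
      ∃ i, x i ∉ L₁ ∧ x i ∉ L₂) :
    StrictConvexOn ℝ {Q : Matrix (Fin D) (Fin D) ℝ | Q.IsSymm ∧ Q.trace = 1}
      (fun Q => ∑ i, euclNorm (Q.mulVec (x i))) := by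
  constructor
  · rintro P ⟨hP1, hP2⟩ Q ⟨hQ1, hQ2⟩ a b ha hb hab
    refine ⟨(hP1.smul a).add (hQ1.smul b), ?_⟩
    show (a • P + b • Q).trace = 1
    rw [trace_add, trace_smul, trace_smul, hP2, hQ2, smul_eq_mul, smul_eq_mul,
      mul_one, mul_one]
    exact hab
  · rintro Q₁ ⟨hs₁, ht₁⟩ Q₂ ⟨hs₂, ht₂⟩ hne a b ha hb hab
    by_contra hcon
    push_neg at hcon
    have hle : ∀ i ∈ Finset.univ, euclNorm ((a • Q₁ + b • Q₂).mulVec (x i))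
        ≤ a * euclNorm (Q₁.mulVec (x i)) + b * euclNorm (Q₂.mulVec (x i)) := by
      intro i _
      rw [add_mulVec, smul_mulVec, smul_mulVec,
        euclNorm_eq_norm, euclNorm_eq_norm, euclNorm_eq_norm,
        WithLp.equiv_symm_add, WithLp.equiv_symm_smul, WithLp.equiv_symm_smul]
      refine (norm_add_le _ _).trans ?_
      rw [norm_smul, norm_smul, Real.norm_eq_abs, Real.norm_eq_abs,
        abs_of_pos ha, abs_of_pos hb]
    have hsum : ∑ i, euclNorm ((a • Q₁ + b • Q₂).mulVec (x i))
        = ∑ i, (a * euclNorm (Q₁.mulVec (x i)) + b * euclNorm (Q₂.mulVec (x i))) := by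
      refine le_antisymm (Finset.sum_le_sum hle) ?_
      rw [Finset.sum_add_distrib, ← Finset.mul_sum, ← Finset.mul_sum]
      simpa [smul_eq_mul] using hcon
    have heq := (Finset.sum_eq_sum_iff_of_le hle).mp hsum
    -- trichotomy from the equality case of the triangle inequality
    have htri : ∀ i, Q₂.mulVec (x i) = 0 ∨ Q₁.mulVec (x i) = 0 ∨
        ∃ r s : ℝ, 0 < r ∧ 0 < s ∧ r • Q₁.mulVec (x i) = s • Q₂.mulVec (x i) := by
      intro i
      by_cases h2 : Q₂.mulVec (x i) = 0
      · exact Or.inl h2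
      by_cases h1 : Q₁.mulVec (x i) = 0
      · exact Or.inr (Or.inl h1)
      have h := heq i (Finset.mem_univ i)
      rw [add_mulVec, smul_mulVec, smul_mulVec,
        euclNorm_eq_norm, euclNorm_eq_norm, euclNorm_eq_norm,
        WithLp.equiv_symm_add, WithLp.equiv_symm_smul, WithLp.equiv_symm_smul] at h
      have hsr : SameRay ℝ (a • (WithLp.equiv 2 (Fin D → ℝ)).symm (Q₁.mulVec (x i)))
          (b • (WithLp.equiv 2 (Fin D → ℝ)).symm (Q₂.mulVec (x i))) := by
        rw [sameRay_iff_norm_add, h, norm_smul, norm_smul, Real.norm_eq_abs,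
          Real.norm_eq_abs, abs_of_pos ha, abs_of_pos hb]
      have he1 : (WithLp.equiv 2 (Fin D → ℝ)).symm (Q₁.mulVec (x i)) ≠ 0 := by
        intro h0
        apply h1
        have := congrArg (WithLp.equiv 2 (Fin D → ℝ)) h0
        rwa [Equiv.apply_symm_apply, WithLp.equiv_zero] at this
      have he2 : (WithLp.equiv 2 (Fin D → ℝ)).symm (Q₂.mulVec (x i)) ≠ 0 := by
        intro h0
        apply h2
        have := congrArg (WithLp.equiv 2 (Fin D → ℝ)) h0
        rwa [Equiv.apply_symm_apply, WithLp.equiv_zero] at this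
      obtain ⟨r, s, hr, hs, hrs⟩ := hsr.exists_pos (smul_ne_zero ha.ne' he1)
        (smul_ne_zero hb.ne' he2)
      refine Or.inr (Or.inr ⟨r * a, s * b, by positivity, by positivity, ?_⟩)
      have h' := congrArg (WithLp.equiv 2 (Fin D → ℝ)) hrs
      rw [WithLp.equiv_smul, WithLp.equiv_smul, WithLp.equiv_smul, WithLp.equiv_smul,
        Equiv.apply_symm_apply, Equiv.apply_symm_apply, smul_smul, smul_smul] at h'
      exact h'
    have hdot1 : ∀ y z, Q₁.mulVec y ⬝ᵥ z = y ⬝ᵥ Q₁.mulVec z := symm_dot hs₁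
    have hdot2 : ∀ y z, Q₂.mulVec y ⬝ᵥ z = y ⬝ᵥ Q₂.mulVec z := symm_dot hs₂
    have final : ∀ u v : Fin D → ℝ, u ≠ 0 → v ≠ 0 →
        (∀ i, u ⬝ᵥ x i = 0 ∨ v ⬝ᵥ x i = 0) → False := by
      intro u v hu hv hcover
      obtain ⟨i, hi1, hi2⟩ := hcond (LinearMap.ker (dotLin u)) (LinearMap.ker (dotLin v))
        (finrank_ker_dotLin u hu) (finrank_ker_dotLin v hv)
      rcases hcover i with h | h
      · exact hi1 (LinearMap.mem_ker.mpr h)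
      · exact hi2 (LinearMap.mem_ker.mpr h)
    by_cases hcase : ∃ i, ∃ c : ℝ, 0 < c ∧ Q₂.mulVec (x i) ≠ 0 ∧
        Q₁.mulVec (x i) = c • Q₂.mulVec (x i)
    · obtain ⟨i₀, c₀, hc₀, hB0, hAB⟩ := hcase
      set M : Matrix (Fin D) (Fin D) ℝ := Q₁ - c₀ • Q₂ with hM
      have hMne : M ≠ 0 := by
        intro h0
        have hQ : Q₁ = c₀ • Q₂ := by rwa [hM, sub_eq_zero] at h0
        have hc1 : (1 : ℝ) = c₀ := by
          have := congrArg Matrix.trace hQ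
          rwa [ht₁, trace_smul, ht₂, smul_eq_mul, mul_one] at this
        exact hne (by rw [hQ, ← hc1, one_smul])
      obtain ⟨k, hk⟩ : ∃ k, M k ≠ 0 := by
        by_contra hall
        push_neg at hall
        apply hMne
        ext k j
        exact congrFun (hall k) j
      have hMx : ∀ y, M.mulVec y = Q₁.mulVec y - c₀ • Q₂.mulVec y := by
        intro y; rw [hM, sub_mulVec, smul_mulVec]
      refine final (Q₂.mulVec (x i₀)) (M k) hB0 hk ?_
      intro i
      rcases htri i with h2 | h1 | ⟨r, s, hr, hs, hrs⟩
      · left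
        rw [hdot2, h2, dotProduct_zero]
      · left
        have hz : c₀ * (Q₂.mulVec (x i₀) ⬝ᵥ x i) = 0 := by
          calc c₀ * (Q₂.mulVec (x i₀) ⬝ᵥ x i)
              = (c₀ • Q₂.mulVec (x i₀)) ⬝ᵥ x i := by rw [smul_dotProduct, smul_eq_mul]
            _ = Q₁.mulVec (x i₀) ⬝ᵥ x i := by rw [← hAB]
            _ = x i₀ ⬝ᵥ Q₁.mulVec (x i) := hdot1 _ _
            _ = 0 := by rw [h1, dotProduct_zero]
        exact (mul_eq_zero.mp hz).resolve_left hc₀.ne'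
      · have hAi : Q₁.mulVec (x i) = (s / r) • Q₂.mulVec (x i) := by
          have h' := congrArg (fun z : Fin D → ℝ => (r⁻¹ : ℝ) • z) hrs
          simp only [smul_smul] at h'
          rw [inv_mul_cancel₀ hr.ne', one_smul] at h'
          rw [div_eq_inv_mul]
          exact h'
        by_cases hcc : s / r = c₀
        · right
          have hz : M.mulVec (x i) = 0 := by rw [hMx, hAi, hcc, sub_self]
          have hzk := congrFun hz k
          simpa [Matrix.mulVec] using hzk
        · left
          have key2 : c₀ * (Q₂.mulVec (x i₀) ⬝ᵥ x i)
              = (s / r) * (Q₂.mulVec (x i₀) ⬝ᵥ x i) := by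
            calc c₀ * (Q₂.mulVec (x i₀) ⬝ᵥ x i)
                = (c₀ • Q₂.mulVec (x i₀)) ⬝ᵥ x i := by rw [smul_dotProduct, smul_eq_mul]
              _ = Q₁.mulVec (x i₀) ⬝ᵥ x i := by rw [← hAB]
              _ = x i₀ ⬝ᵥ Q₁.mulVec (x i) := hdot1 _ _
              _ = x i₀ ⬝ᵥ ((s / r) • Q₂.mulVec (x i)) := by rw [← hAi]
              _ = (s / r) * (x i₀ ⬝ᵥ Q₂.mulVec (x i)) := by
                  rw [dotProduct_smul, smul_eq_mul]
              _ = (s / r) * (Q₂.mulVec (x i₀) ⬝ᵥ x i) := by rw [hdot2]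
          by_contra hd
          exact hcc (mul_right_cancel₀ hd key2.symm)
    · push_neg at hcase
      have hsplit : ∀ i, Q₂.mulVec (x i) = 0 ∨ Q₁.mulVec (x i) = 0 := by
        intro i
        rcases htri i with h | h | ⟨r, s, hr, hs, hrs⟩
        · exact Or.inl h
        · exact Or.inr h
        · by_cases h2 : Q₂.mulVec (x i) = 0
          · exact Or.inl h2
          · exfalso
            have hAi : Q₁.mulVec (x i) = (s / r) • Q₂.mulVec (x i) := by
              have h' := congrArg (fun z : Fin D → ℝ => (r⁻¹ : ℝ) • z) hrs
              simp only [smul_smul] at h'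
              rw [inv_mul_cancel₀ hr.ne', one_smul] at h'
              rw [div_eq_inv_mul]
              exact h'
            exact hcase i (s / r) (by positivity) h2 hAi
      obtain ⟨k₂, hk₂⟩ : ∃ k, Q₂ k k ≠ 0 := by
        by_contra hall
        push_neg at hall
        have hz : Q₂.trace = 0 := by simp [Matrix.trace, Matrix.diag, hall]
        rw [ht₂] at hz
        exact one_ne_zero hz
      obtain ⟨k₁, hk₁⟩ : ∃ k, Q₁ k k ≠ 0 := by
        by_contra hall
        push_neg at hall
        have hz : Q₁.trace = 0 := by simp [Matrix.trace, Matrix.diag, hall]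
        rw [ht₁] at hz
        exact one_ne_zero hz
      refine final (Q₂ k₂) (Q₁ k₁) (fun h0 => hk₂ (congrFun h0 k₂))
        (fun h0 => hk₁ (congrFun h0 k₁)) ?_
      intro i
      rcases hsplit i with h | h
      · left
        have hzk := congrFun h k₂
        simpa [Matrix.mulVec] using hzk
      · right
        have hzk := congrFun h k₁
        simpa [Matrix.mulVec] using hzk
end

section
/- If Q̂ minimizes F over the affine set H of symmetric trace-1 matrices and the directional derivative F'(Q̂) = Σ_{i=1}^N (Q̂ x_i x_iᵀ + x_i x_iᵀ Q̂)/(2‖Q̂ x_i‖) is well-defined (i.e., Q̂ x_i ≠ 0 for all i), then F'(Q̂) is a scalar multiple of the identity matrix. -/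
open Matrix Finset

/-- derivative of t ↦ ‖a + t b‖ at 0 when a ≠ 0 -/
lemma deriv_norm_line {D : ℕ} (a b : Fin D → ℝ) (ha : a ≠ 0) :
    HasDerivAt (fun t : ℝ => euclNorm (a + t • b)) ((∑ j, a j * b j) / euclNorm a) 0 := by
  have hS : (0:ℝ) < ∑ j, a j ^ 2 := by
    rcases Function.ne_iff.1 ha with ⟨j, hj⟩
    have : (0:ℝ) < a j ^ 2 := by
      have := sq_nonneg (a j)
      rcases this.lt_or_eq with h|h
      · exact h
      · exact absurd (pow_eq_zero_iff (n:=2) (by norm_num) |>.1 h.symm) hj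
    exact Finset.sum_pos' (fun _ _ => sq_nonneg _) ⟨j, Finset.mem_univ j, this⟩
  have hq : HasDerivAt (fun t : ℝ => ∑ j, (a j + t * b j) ^ 2) (∑ j, 2 * a j * b j) 0 := by
    have : HasDerivAt (fun t : ℝ => ∑ j, (a j + t * b j) ^ 2)
        (∑ j, ((2:ℕ) * (a j + 0 * b j) ^ 1 * (1 * b j))) 0 := by
      apply HasDerivAt.fun_sum
      intro j _
      exact (((hasDerivAt_id (0:ℝ)).mul_const (b j)).const_add (a j)).pow 2
    simpa [mul_comm, mul_assoc, mul_left_comm] using this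
  have hq0 : (∑ j, (a j + 0 * b j) ^ 2) ≠ 0 := by simpa using hS.ne'
  have hsq := (Real.hasDerivAt_sqrt hq0).comp 0 hq
  have hfun : (fun t : ℝ => euclNorm (a + t • b)) =
      (Real.sqrt ∘ fun t : ℝ => ∑ j, (a j + t * b j) ^ 2) := by
    funext t; simp [euclNorm, Function.comp]
  have hval : 1 / (2 * Real.sqrt (∑ j, (a j + 0 * b j) ^ 2)) * (∑ j, 2 * a j * b j)
      = (∑ j, a j * b j) / euclNorm a := by
    have hs : Real.sqrt (∑ j, a j ^ 2) ≠ 0 := by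
      exact (Real.sqrt_pos.2 hS).ne'
    simp only [zero_mul, add_zero, euclNorm]
    have h2 : (∑ j, 2 * a j * b j) = 2 * ∑ j, a j * b j := by
      rw [Finset.mul_sum]; exact Finset.sum_congr rfl fun j _ => by ring
    rw [h2]
    field_simp
  rw [hfun, ← hval]
  exact hsq

lemma std_transpose {D : ℕ} (j k : Fin D) :
    (Matrix.single j k (1:ℝ))ᵀ = Matrix.single k j 1 := by
  ext p q
  simp only [Matrix.transpose_apply, Matrix.single, Matrix.of_apply]
  by_cases h1 : j = q <;> by_cases h2 : k = p <;> simp [h1, h2]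

/-- First-order condition: for any symmetric trace-zero direction Δ the directional
derivative vanishes. -/
lemma foc {D N : ℕ} (x : Fin N → Fin D → ℝ) (Qh : Matrix (Fin D) (Fin D) ℝ)
    (hQtr : Qh.trace = 1)
    (hmin : ∀ Q : Matrix (Fin D) (Fin D) ℝ, Q.IsSymm → Q.trace = 1 →
      ∑ i, euclNorm (Qh.mulVec (x i)) ≤ ∑ i, euclNorm (Q.mulVec (x i)))
    (hnz : ∀ i, Qh.mulVec (x i) ≠ 0) (hQsym : Qh.IsSymm)
    (Δ : Matrix (Fin D) (Fin D) ℝ) (hΔsym : Δ.IsSymm) (hΔtr : Δ.trace = 0) :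
    ∑ i, (∑ j, Qh.mulVec (x i) j * Δ.mulVec (x i) j) / euclNorm (Qh.mulVec (x i)) = 0 := by
  set φ : ℝ → ℝ := fun t => ∑ i, euclNorm ((Qh + t • Δ).mulVec (x i)) with hφ
  have hmem : ∀ t : ℝ, (Qh + t • Δ).IsSymm ∧ (Qh + t • Δ).trace = 1 := by
    intro t
    constructor
    · unfold Matrix.IsSymm
      rw [Matrix.transpose_add, Matrix.transpose_smul, hQsym, hΔsym]
    · rw [Matrix.trace_add, Matrix.trace_smul, hQtr, hΔtr]; simp
  have hloc : IsLocalMin φ 0 := by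
    apply Filter.Eventually.of_forall
    intro t
    have h0 : φ 0 = ∑ i, euclNorm (Qh.mulVec (x i)) := by simp [hφ]
    rw [h0]
    exact hmin _ (hmem t).1 (hmem t).2
  have hder : HasDerivAt φ
      (∑ i, (∑ j, Qh.mulVec (x i) j * Δ.mulVec (x i) j) / euclNorm (Qh.mulVec (x i))) 0 := by
    apply HasDerivAt.fun_sum
    intro i _
    have h := deriv_norm_line (Qh.mulVec (x i)) (Δ.mulVec (x i)) (hnz i)
    have heq : (fun t : ℝ => euclNorm (Qh.mulVec (x i) + t • Δ.mulVec (x i))) =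
        (fun t : ℝ => euclNorm ((Qh + t • Δ).mulVec (x i))) := by
      funext t
      congr 1
      rw [Matrix.add_mulVec, Matrix.smul_mulVec]
    rwa [heq] at h
  exact hloc.hasDerivAt_eq_zero hder

/-- If `Q̂` minimizes `F` over symmetric trace-one matrices and `Q̂ xᵢ ≠ 0` for all `i`,
then `F'(Q̂) = Σᵢ (Q̂ xᵢ xᵢᵀ + xᵢ xᵢᵀ Q̂)/(2‖Q̂ xᵢ‖)` is a scalar multiple of the identity. -/
theorem stmt7 {D N : ℕ} (x : Fin N → Fin D → ℝ) (Qh : Matrix (Fin D) (Fin D) ℝ)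
    (hQsym : Qh.IsSymm) (hQtr : Qh.trace = 1)
    (hmin : ∀ Q : Matrix (Fin D) (Fin D) ℝ, Q.IsSymm → Q.trace = 1 →
      ∑ i, euclNorm (Qh.mulVec (x i)) ≤ ∑ i, euclNorm (Q.mulVec (x i)))
    (hnz : ∀ i, Qh.mulVec (x i) ≠ 0) :
    ∃ c : ℝ,
      ∑ i, (2 * euclNorm (Qh.mulVec (x i)))⁻¹ •
          (Qh * Matrix.vecMulVec (x i) (x i) + Matrix.vecMulVec (x i) (x i) * Qh) =
        c • (1 : Matrix (Fin D) (Fin D) ℝ) := by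
  -- D > 0
  have hD : 0 < D := by
    by_contra h
    push_neg at h
    interval_cases D
    · simp [Matrix.trace] at hQtr
  set a : Fin N → Fin D → ℝ := fun i => Qh.mulVec (x i) with ha
  set s : Fin N → ℝ := fun i => euclNorm (a i) with hs
  set M : Matrix (Fin D) (Fin D) ℝ :=
    ∑ i, (2 * euclNorm (Qh.mulVec (x i)))⁻¹ •
      (Qh * Matrix.vecMulVec (x i) (x i) + Matrix.vecMulVec (x i) (x i) * Qh) with hM
  -- entrywise formula for M
  have hQ' : ∀ l k, Qh l k = Qh k l := by
    intro l k
    conv_lhs => rw [← hQsym]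
    rfl
  have hMentry : ∀ j k, M j k = ∑ i, (2 * s i)⁻¹ * (a i j * x i k + x i j * a i k) := by
    intro j k
    rw [hM, Matrix.sum_apply]
    apply Finset.sum_congr rfl
    intro i _
    have h1 : (Qh * Matrix.vecMulVec (x i) (x i)) j k = a i j * x i k := by
      simp only [Matrix.mul_apply, Matrix.vecMulVec_apply, ha, Matrix.mulVec, dotProduct]
      rw [Finset.sum_mul]
      exact Finset.sum_congr rfl fun l _ => by ring
    have h2 : (Matrix.vecMulVec (x i) (x i) * Qh) j k = x i j * a i k := by
      simp only [Matrix.mul_apply, Matrix.vecMulVec_apply, ha, Matrix.mulVec, dotProduct]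
      rw [Finset.mul_sum]
      exact Finset.sum_congr rfl fun l _ => by rw [hQ' l k]; ring
    simp [Matrix.add_apply, h1, h2]
    exact Or.inl rfl
  -- off-diagonal entries vanish
  have hoff : ∀ j k, j ≠ k → M j k = 0 := by
    intro j k hjk
    set Δ : Matrix (Fin D) (Fin D) ℝ :=
      Matrix.single j k 1 + Matrix.single k j 1 with hΔ
    have hΔsym : Δ.IsSymm := by
      unfold Matrix.IsSymm
      rw [hΔ, Matrix.transpose_add, std_transpose, std_transpose, add_comm]
    have hΔtr : Δ.trace = 0 := by
      rw [hΔ, Matrix.trace_add, Matrix.trace_single_eq_of_ne _ _ _ (Ne.symm hjk),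
        Matrix.trace_single_eq_of_ne _ _ _ hjk, add_zero]
    have hfoc := foc x Qh hQtr hmin hnz hQsym Δ hΔsym hΔtr
    have hmv : ∀ v : Fin D → ℝ, ∀ l, Δ.mulVec v l =
        (if l = j then v k else 0) + (if l = k then v j else 0) := by
      intro v l
      rw [hΔ, Matrix.add_mulVec, Matrix.single_mulVec, Matrix.single_mulVec]
      simp [Function.update_apply]
    have hinner : ∀ i, (∑ l, a i l * Δ.mulVec (x i) l) = a i j * x i k + a i k * x i j := by
      intro i
      simp only [hmv]
      rw [Finset.sum_congr rfl (fun l _ => mul_add (a i l) _ _), Finset.sum_add_distrib]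
      simp [mul_ite, Finset.sum_ite_eq', hjk]
    rw [Finset.sum_congr rfl (fun i _ => by rw [hinner i])] at hfoc
    rw [hMentry]
    have : ∀ i, (2 * s i)⁻¹ * (a i j * x i k + x i j * a i k)
        = (1/2) * ((a i j * x i k + a i k * x i j) / s i) := by
      intro i
      rw [mul_inv]
      ring
    rw [Finset.sum_congr rfl (fun i _ => this i), ← Finset.mul_sum, hfoc, mul_zero]
  -- diagonal entries are equal
  have hdiag : ∀ j k : Fin D, M j j = M k k := by
    intro j k
    by_cases hjk : j = k
    · rw [hjk]
    set Δ : Matrix (Fin D) (Fin D) ℝ :=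
      Matrix.single j j 1 - Matrix.single k k 1 with hΔ
    have hΔsym : Δ.IsSymm := by
      unfold Matrix.IsSymm
      rw [hΔ, Matrix.transpose_sub, std_transpose, std_transpose]
    have hΔtr : Δ.trace = 0 := by
      rw [hΔ, Matrix.trace_sub, Matrix.trace_single_eq_same, Matrix.trace_single_eq_same,
        sub_self]
    have hfoc := foc x Qh hQtr hmin hnz hQsym Δ hΔsym hΔtr
    have hmv : ∀ v : Fin D → ℝ, ∀ l, Δ.mulVec v l =
        (if l = j then v j else 0) - (if l = k then v k else 0) := by
      intro v l
      rw [hΔ, Matrix.sub_mulVec, Matrix.single_mulVec, Matrix.single_mulVec]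
      simp [Function.update_apply]
    have hinner : ∀ i, (∑ l, a i l * Δ.mulVec (x i) l) = a i j * x i j - a i k * x i k := by
      intro i
      simp only [hmv]
      rw [Finset.sum_congr rfl (fun l _ => mul_sub (a i l) _ _), Finset.sum_sub_distrib]
      simp [mul_ite, Finset.sum_ite_eq']
    rw [Finset.sum_congr rfl (fun i _ => by rw [hinner i])] at hfoc
    have hsplit : ∑ i, (a i j * x i j - a i k * x i k) / s i
        = (∑ i, (a i j * x i j) / s i) - ∑ i, (a i k * x i k) / s i := by
      rw [← Finset.sum_sub_distrib]
      exact Finset.sum_congr rfl fun i _ => sub_div _ _ _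
    rw [hsplit, sub_eq_zero] at hfoc
    rw [hMentry, hMentry]
    have hgen : ∀ p : Fin D, ∑ i, (2 * s i)⁻¹ * (a i p * x i p + x i p * a i p)
        = ∑ i, (a i p * x i p) / s i := by
      intro p
      apply Finset.sum_congr rfl
      intro i _
      rw [mul_inv]
      ring
    rw [hgen, hgen, hfoc]
  -- assemble
  refine ⟨M ⟨0, hD⟩ ⟨0, hD⟩, ?_⟩
  show M = _
  ext j k
  by_cases hjk : j = k
  · subst hjk
    rw [hdiag j ⟨0, hD⟩]
    simp [Matrix.one_apply]
  · rw [hoff j k hjk]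
    simp [Matrix.one_apply, hjk]
end

section
/- Under the conditions that Q̂ x_i ≠ 0 for all i, the minimizer Q̂ of F on H satisfies the fixed-point equation Q̂ = c·(Σ_{i=1}^N x_i x_iᵀ/‖Q̂ x_i‖)^{-1} where c is chosen so tr(Q̂) = 1, provided the matrix Σ_{i=1}^N x_i x_iᵀ/‖Q̂ x_i‖ is invertible. -/
open Matrix Finset

theorem euclNorm_pos {D : ℕ} {v : Fin D → ℝ} (hv : v ≠ 0) : 0 < euclNorm v := by
  apply Real.sqrt_pos.mpr
  rcases Function.ne_iff.mp hv with ⟨j, hj⟩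
  refine Finset.sum_pos' (fun i _ => sq_nonneg _) ⟨j, Finset.mem_univ j, ?_⟩
  have := abs_pos.mpr hj
  calc (0:ℝ) < |v j| ^ 2 := by positivity
  _ = v j ^ 2 := sq_abs _

theorem hasDerivAt_euclNorm {D : ℕ} (a b : Fin D → ℝ) (ha : a ≠ 0) :
    HasDerivAt (fun t : ℝ => euclNorm (a + t • b)) ((a ⬝ᵥ b) / euclNorm a) 0 := by
  have hg := HasDerivAt.sum (fun j (_ : j ∈ Finset.univ) =>
    (((hasDerivAt_id (0:ℝ)).mul_const (b j)).const_add (a j)).pow 2)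
  simp only [id, zero_mul, add_zero, pow_one, one_mul, Nat.cast_ofNat] at hg
  have h0 : (∑ j, (a j + (0:ℝ) * b j) ^ 2) ≠ 0 := by
    simp only [zero_mul, add_zero]
    exact ne_of_gt (Real.sqrt_pos.mp (euclNorm_pos ha))
  have h2 := hg.sqrt (by simpa using h0)
  have hfun : (fun t : ℝ => euclNorm (a + t • b))
      = fun t => Real.sqrt (∑ j, (a j + t * b j) ^ 2) := by
    funext t
    unfold euclNorm
    congr 1
  have hval : (∑ j, 2 * a j * b j) / (2 * Real.sqrt (∑ j, (a j) ^ 2))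
      = (a ⬝ᵥ b) / euclNorm a := by
    simp only [mul_assoc]
    rw [← Finset.mul_sum, mul_div_mul_left _ _ (two_ne_zero)]
    rfl
  rw [hfun, ← hval]
  convert h2 using 2 <;> simp

theorem dot_trace {D : ℕ} (Q H : Matrix (Fin D) (Fin D) ℝ) (hH : H.IsSymm) (v : Fin D → ℝ) :
    (Q *ᵥ v) ⬝ᵥ (H *ᵥ v) = (Q * vecMulVec v v * H).trace := by
  simp only [trace, diag_apply, mul_apply, mulVec, dotProduct, vecMulVec_apply,
    Finset.sum_mul, Finset.mul_sum]
  refine Finset.sum_congr rfl fun p _ => Finset.sum_congr rfl fun q _ =>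
    Finset.sum_congr rfl fun k _ => ?_
  rw [hH.apply q p]
  ring

theorem trace_mul_self_symm_eq_zero {D : ℕ} {H : Matrix (Fin D) (Fin D) ℝ}
    (h : (H * H).trace = 0) (hH : H.IsSymm) : H = 0 := by
  have hdiag : (H * H).trace = ∑ p, ∑ q, H p q ^ 2 := by
    simp only [trace, diag_apply, mul_apply]
    refine Finset.sum_congr rfl fun p _ => Finset.sum_congr rfl fun q _ => ?_
    rw [hH.apply q p]; ring
  rw [hdiag] at h
  ext p q
  have h1 := (Finset.sum_eq_zero_iff_of_nonneg
    (fun i _ => Finset.sum_nonneg fun j _ => sq_nonneg (H i j))).mp h p (Finset.mem_univ p)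
  have h2 := (Finset.sum_eq_zero_iff_of_nonneg (fun j _ => sq_nonneg (H p j))).mp h1 q
    (Finset.mem_univ q)
  simpa using pow_eq_zero_iff two_ne_zero |>.mp h2

theorem quad_expand {D N : ℕ} (x : Fin N → Fin D → ℝ) (c : Fin N → ℝ)
    (v : Fin D → ℝ) :
    v ⬝ᵥ ((∑ i, c i • vecMulVec (x i) (x i)) *ᵥ v) = ∑ i, c i * (x i ⬝ᵥ v) ^ 2 := by
  simp only [dotProduct, mulVec, Matrix.sum_apply, Matrix.smul_apply, vecMulVec_apply,
    smul_eq_mul, Finset.mul_sum, Finset.sum_mul]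
  have h : ∀ i : Fin N, c i * (∑ p, x i p * v p) ^ 2
      = ∑ p, ∑ q, v p * (c i * (x i p * x i q) * v q) := by
    intro i
    rw [sq, Finset.sum_mul_sum, Finset.mul_sum]
    refine Finset.sum_congr rfl fun p _ => ?_
    rw [Finset.mul_sum]
    exact Finset.sum_congr rfl fun q _ => by ring
  calc ∑ p, ∑ q, ∑ i, v p * (c i * (x i p * x i q) * v q)
      = ∑ p, ∑ i, ∑ q, v p * (c i * (x i p * x i q) * v q) :=
        Finset.sum_congr rfl fun p _ => Finset.sum_comm
    _ = ∑ i, ∑ p, ∑ q, v p * (c i * (x i p * x i q) * v q) := Finset.sum_comm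
    _ = ∑ i, c i * (∑ p, x i p * v p) ^ 2 :=
        Finset.sum_congr rfl fun i _ => (h i).symm

theorem diag_BAB {D : ℕ} (A B : Matrix (Fin D) (Fin D) ℝ) (k : Fin D) :
    (Bᵀ * A * B) k k = (fun i => B i k) ⬝ᵥ (A *ᵥ fun i => B i k) := by
  simp only [mul_apply, transpose_apply, dotProduct, mulVec, Finset.sum_mul, Finset.mul_sum]
  rw [Finset.sum_comm]
  exact Finset.sum_congr rfl fun p _ => Finset.sum_congr rfl fun q _ => by ring

/-- If `Q̂` minimizes `F` over symmetric trace-one matrices, `Q̂ xᵢ ≠ 0` for all `i`, and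
`A = Σᵢ xᵢxᵢᵀ/‖Q̂ xᵢ‖` is invertible, then `Q̂ = A⁻¹ / tr(A⁻¹)`. -/
theorem stmt8 {D N : ℕ} (x : Fin N → Fin D → ℝ) (Qh : Matrix (Fin D) (Fin D) ℝ)
    (hQsym : Qh.IsSymm) (hQtr : Qh.trace = 1)
    (hmin : ∀ Q : Matrix (Fin D) (Fin D) ℝ, Q.IsSymm → Q.trace = 1 →
      ∑ i, euclNorm (Qh.mulVec (x i)) ≤ ∑ i, euclNorm (Q.mulVec (x i)))
    (hnz : ∀ i, Qh.mulVec (x i) ≠ 0)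
    (A : Matrix (Fin D) (Fin D) ℝ)
    (hA : A = ∑ i, (euclNorm (Qh.mulVec (x i)))⁻¹ • Matrix.vecMulVec (x i) (x i))
    (hinv : IsUnit A.det) :
    Qh = (A⁻¹.trace)⁻¹ • A⁻¹ := by
  have hnpos : ∀ i, 0 < euclNorm (Qh *ᵥ x i) := fun i => euclNorm_pos (hnz i)
  -- A is symmetric
  have hAsym : A.IsSymm := by
    rw [Matrix.IsSymm, hA, Matrix.transpose_sum]
    refine Finset.sum_congr rfl fun i _ => ?_
    rw [Matrix.transpose_smul]
    congr 1
    ext p q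
    simp [vecMulVec_apply, mul_comm]
  -- Step 1: stationarity
  have hstat : ∀ H : Matrix (Fin D) (Fin D) ℝ, H.IsSymm → H.trace = 0 →
      (Qh * A * H).trace = 0 := by
    intro H hHsym hHtr
    have hder : HasDerivAt (fun t : ℝ => ∑ i, euclNorm ((Qh + t • H) *ᵥ x i))
        (∑ i, ((Qh *ᵥ x i) ⬝ᵥ (H *ᵥ x i)) / euclNorm (Qh *ᵥ x i)) 0 := by
      apply HasDerivAt.fun_sum
      intro i _
      have h := hasDerivAt_euclNorm (Qh *ᵥ x i) (H *ᵥ x i) (hnz i)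
      have e : (fun t : ℝ => euclNorm ((Qh + t • H) *ᵥ x i))
          = fun t => euclNorm (Qh *ᵥ x i + t • H *ᵥ x i) := by
        funext t
        rw [add_mulVec, smul_mulVec]
      rw [e]
      exact h
    have hmin0 : IsLocalMin (fun t : ℝ => ∑ i, euclNorm ((Qh + t • H) *ᵥ x i)) 0 := by
      apply Filter.Eventually.of_forall
      intro t
      simp only [zero_smul, add_zero]
      exact hmin (Qh + t • H) (hQsym.add (hHsym.smul t))
        (by rw [Matrix.trace_add, Matrix.trace_smul, hQtr, hHtr, smul_zero, add_zero])
    have hd0 := hmin0.hasDerivAt_eq_zero hder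
    have hre : (Qh * A * H).trace
        = ∑ i, ((Qh *ᵥ x i) ⬝ᵥ (H *ᵥ x i)) / euclNorm (Qh *ᵥ x i) := by
      rw [hA, Finset.mul_sum, Finset.sum_mul, Matrix.trace_sum]
      refine Finset.sum_congr rfl fun i _ => ?_
      rw [Matrix.mul_smul, Matrix.smul_mul, Matrix.trace_smul, ← dot_trace Qh H hHsym (x i)]
      rw [smul_eq_mul, div_eq_inv_mul]
    rw [hre]
    exact hd0
  -- trivial case D = 0
  rcases Nat.eq_zero_or_pos D with hD | hD
  · subst hD; ext i j; exact i.elim0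
  have hDne : (D : ℝ) ≠ 0 := Nat.cast_ne_zero.mpr hD.ne'
  -- Step 2: Qh * A + A * Qh = c • 1
  set M : Matrix (Fin D) (Fin D) ℝ := Qh * A + A * Qh with hM
  have hMsym : M.IsSymm := by
    rw [Matrix.IsSymm, hM, Matrix.transpose_add, Matrix.transpose_mul, Matrix.transpose_mul,
      hAsym.eq, hQsym.eq, add_comm]
  set c : ℝ := M.trace / D with hc
  set H₀ : Matrix (Fin D) (Fin D) ℝ := M - c • 1 with hH₀
  have hH₀sym : H₀.IsSymm := by
    rw [Matrix.IsSymm, hH₀, Matrix.transpose_sub, hMsym.eq, Matrix.transpose_smul,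
      Matrix.transpose_one]
  have hH₀tr : H₀.trace = 0 := by
    rw [hH₀, Matrix.trace_sub, Matrix.trace_smul, Matrix.trace_one, hc]
    simp only [smul_eq_mul, Fintype.card_fin]
    field_simp
    ring
  have htrMH : (M * H₀).trace = 0 := by
    have h1 : (A * Qh * H₀).trace = (Qh * A * H₀).trace := by
      have h2 : ((A * Qh * H₀)ᵀ).trace = (A * Qh * H₀).trace := Matrix.trace_transpose _
      rw [← h2, Matrix.transpose_mul, Matrix.transpose_mul, hAsym.eq, hQsym.eq, hH₀sym.eq,
        ← Matrix.mul_assoc, Matrix.trace_mul_cycle, Matrix.trace_mul_cycle]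
    rw [hM, Matrix.add_mul, Matrix.trace_add, h1, hstat H₀ hH₀sym hH₀tr]
    ring
  have hH₀zero : H₀ = 0 := by
    apply trace_mul_self_symm_eq_zero _ hH₀sym
    have h2 : M = H₀ + c • 1 := by rw [hH₀]; abel
    rw [h2, Matrix.add_mul, Matrix.trace_add, Matrix.smul_mul, Matrix.one_mul,
      Matrix.trace_smul, hH₀tr, smul_zero, add_zero] at htrMH
    exact htrMH
  have hMc : M = c • 1 := sub_eq_zero.mp (by rw [← hH₀]; exact hH₀zero)
  -- Step 3: Lyapunov uniqueness
  set μ : ℝ := c / 2 with hμ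
  set B : Matrix (Fin D) (Fin D) ℝ := Qh - μ • A⁻¹ with hB
  have hAA : A * A⁻¹ = 1 := Matrix.mul_nonsing_inv A hinv
  have hA'A : A⁻¹ * A = 1 := Matrix.nonsing_inv_mul A hinv
  have hABBA : A * B + B * A = 0 := by
    rw [hB, Matrix.mul_sub, Matrix.sub_mul, Matrix.mul_smul, Matrix.smul_mul, hAA, hA'A]
    have hcomm : A * Qh + Qh * A = c • 1 := by rw [add_comm]; rw [← hM]; exact hMc
    calc A * Qh - μ • 1 + (Qh * A - μ • 1) = (A * Qh + Qh * A) - (2 * μ) • 1 := by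
          rw [two_mul, add_smul]; abel
    _ = c • 1 - (2 * μ) • 1 := by rw [hcomm]
    _ = 0 := by rw [hμ, show (2:ℝ) * (c / 2) = c from by ring, sub_self]
  have hBsym : B.IsSymm := by
    rw [Matrix.IsSymm, hB, Matrix.transpose_sub, hQsym.eq, Matrix.transpose_smul,
      Matrix.transpose_nonsing_inv, hAsym.eq]
  have hBA : B * A = -(A * B) := eq_neg_of_add_eq_zero_right hABBA
  have htrBAB : (B * A * B).trace = 0 := by
    have e1 : (B * A * B).trace = (B * B * A).trace := by
      rw [Matrix.trace_mul_comm, ← Matrix.mul_assoc]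
    have e2 : (B * A * B).trace = -((B * B * A).trace) := by
      rw [hBA, Matrix.neg_mul, Matrix.trace_neg, Matrix.mul_assoc, Matrix.trace_mul_comm]
    linarith [e1, e2]
  -- A is positive semidefinite
  have hApsd : A.PosSemidef := by
    rw [Matrix.posSemidef_iff_dotProduct_mulVec]
    constructor
    · show Aᴴ = A
      rw [Matrix.conjTranspose_eq_transpose_of_trivial]
      exact hAsym
    · intro v
      rw [star_trivial, hA, quad_expand]
      exact Finset.sum_nonneg fun i _ =>
        mul_nonneg (inv_nonneg.mpr (hnpos i).le) (sq_nonneg _)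
  -- diagonal of Bᵀ A B vanishes
  have htrP : (Bᵀ * A * B).trace = 0 := by rw [hBsym.eq]; exact htrBAB
  have hdiagnn : ∀ k, 0 ≤ (Bᵀ * A * B) k k := by
    intro k
    rw [diag_BAB]
    have := hApsd.dotProduct_mulVec_nonneg (fun i => B i k)
    rwa [star_trivial] at this
  have hdiag0 : ∀ k, (Bᵀ * A * B) k k = 0 := by
    have htr' : ∑ k, (Bᵀ * A * B) k k = 0 := htrP
    intro k
    exact (Finset.sum_eq_zero_iff_of_nonneg (fun k _ => hdiagnn k)).mp htr' k (Finset.mem_univ k)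
  have hB0 : B = 0 := by
    ext i k
    have h1 : (fun i => B i k) ⬝ᵥ (A *ᵥ fun i => B i k) = 0 := by
      rw [← diag_BAB]; exact hdiag0 k
    have h2 : A *ᵥ (fun i => B i k) = 0 := by
      apply (hApsd.dotProduct_mulVec_zero_iff _).mp
      rwa [star_trivial]
    have h3 : (fun i => B i k) = 0 := by
      have h4 : A⁻¹ *ᵥ (A *ᵥ fun i => B i k) = A⁻¹ *ᵥ 0 := by rw [h2]
      rwa [Matrix.mulVec_mulVec, hA'A, Matrix.one_mulVec, Matrix.mulVec_zero] at h4
    exact congrFun h3 i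
  have hQ : Qh = μ • A⁻¹ := sub_eq_zero.mp (by rw [← hB]; exact hB0)
  have htr1 : μ * A⁻¹.trace = 1 := by
    have h5 := hQtr
    rw [hQ, Matrix.trace_smul, smul_eq_mul] at h5
    exact h5
  rw [hQ]
  congr 1
  exact eq_inv_of_mul_eq_one_left htr1
end

section
/- Suppose conditions (C1) and (C2) hold: the minimum of Σ_{x∈X₁}‖Qx‖ over Q ∈ H with Q P_{L*⊥} = 0 strictly exceeds √2 times both min_{v ∈ L*⊥, ‖v‖=1} Σ_{x∈X₀}|vᵀx| and max_{v ∈ L*, ‖v‖=1} Σ_{x∈X₀}|vᵀx|. Then any minimizer Q̂ of F on H satisfies ker(Q̂) ⊇ L*. -/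
open Matrix Finset Module
open scoped RealInnerProductSpace Classical

namespace Stmt16Aux

variable {D : ℕ}

local notation "E" => EuclideanSpace ℝ (Fin D)

lemma trace_bridge (Q : Matrix (Fin D) (Fin D) ℝ) :
    LinearMap.trace ℝ (EuclideanSpace ℝ (Fin D)) (Matrix.toEuclideanLin Q) = Q.trace := by
  rw [Matrix.toEuclideanLin_eq_toLin,
    LinearMap.trace_eq_matrix_trace ℝ (PiLp.basisFun 2 ℝ (Fin D)), LinearMap.toMatrix_toLin]

lemma symm_bridge (Q : Matrix (Fin D) (Fin D) ℝ) :
    Q.IsSymm ↔ (Matrix.toEuclideanLin Q).IsSymmetric := by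
  rw [← Matrix.isHermitian_iff_isSymmetric]
  constructor
  · intro h
    ext i j
    simp [Matrix.conjTranspose, ← Matrix.IsSymm.apply h i j, Matrix.transpose]
  · intro h
    ext i j
    have := congrFun (congrFun h i) j
    simpa [Matrix.conjTranspose] using this

noncomputable def rankOne (u : EuclideanSpace ℝ (Fin D)) :
    EuclideanSpace ℝ (Fin D) →ₗ[ℝ] EuclideanSpace ℝ (Fin D) :=
  (LinearMap.toSpanSingleton ℝ (EuclideanSpace ℝ (Fin D)) u).comp (innerSL ℝ u).toLinearMap

@[simp] lemma rankOne_apply (u x : E) : rankOne u x = ⟪u, x⟫ • u := rfl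

lemma rankOne_symm (u x y : E) : ⟪rankOne u x, y⟫ = ⟪x, rankOne u y⟫ := by
  simp only [rankOne_apply, real_inner_smul_left, inner_smul_right]
  rw [real_inner_comm x u]
  ring

lemma trace_rankOne (u : E) : LinearMap.trace ℝ _ (rankOne u) = ‖u‖ ^ 2 := by
  rw [rankOne, LinearMap.trace_comp_comm']
  have h2 : (innerSL ℝ u).toLinearMap.comp (LinearMap.toSpanSingleton ℝ _ u)
      = (‖u‖ ^ 2 : ℝ) • LinearMap.id := by
    ext c
    simp only [LinearMap.coe_comp, Function.comp_apply, LinearMap.toSpanSingleton_apply,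
      ContinuousLinearMap.coe_coe, innerSL_apply_apply, LinearMap.smul_apply, LinearMap.id_coe, id_eq,
      smul_eq_mul, real_inner_smul_right, real_inner_self_eq_norm_sq]
    ring
  rw [h2, _root_.map_smul, LinearMap.trace_id]
  simp

lemma trace_eq_sum_inner (b : OrthonormalBasis (Fin D) ℝ (EuclideanSpace ℝ (Fin D)))
    (f : EuclideanSpace ℝ (Fin D) →ₗ[ℝ] EuclideanSpace ℝ (Fin D)) :
    LinearMap.trace ℝ _ f = ∑ i, ⟪b i, f (b i)⟫ := by
  rw [LinearMap.trace_eq_matrix_trace ℝ b.toBasis]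
  simp only [Matrix.trace, Matrix.diag, LinearMap.toMatrix_apply, b.coe_toBasis,
    b.coe_toBasis_repr_apply, b.repr_apply_apply]

lemma sum_sq_le_sq_sum_abs {n : ℕ} (a : Fin n → ℝ) :
    ∑ i, (a i) ^ 2 ≤ (∑ i, |a i|) ^ 2 := by
  calc ∑ i, (a i) ^ 2 = ∑ i, |a i| * |a i| := by
        simp only [← sq_abs (a _), sq]
    _ ≤ ∑ i, |a i| * (∑ j, |a j|) :=
        Finset.sum_le_sum fun i _ => mul_le_mul_of_nonneg_left
          (Finset.single_le_sum (f := fun j => |a j|) (fun j _ => abs_nonneg _) (mem_univ i))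
          (abs_nonneg _)
    _ = (∑ i, |a i|) ^ 2 := by rw [← Finset.sum_mul]; ring

lemma le_sqrt_two_mul {a b c : ℝ} (ha : 0 ≤ a) (hb : 0 ≤ b) (hc : 0 ≤ c)
    (h : a ^ 2 + b ^ 2 ≤ c ^ 2) : a + b ≤ Real.sqrt 2 * c := by
  have h1 : (a + b) ^ 2 ≤ (Real.sqrt 2 * c) ^ 2 := by
    rw [mul_pow, Real.sq_sqrt (by norm_num : (0:ℝ) ≤ 2)]
    nlinarith [sq_nonneg (a - b)]
  calc a + b = Real.sqrt ((a + b) ^ 2) := (Real.sqrt_sq (by linarith)).symm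
    _ ≤ Real.sqrt ((Real.sqrt 2 * c) ^ 2) := Real.sqrt_le_sqrt h1
    _ = Real.sqrt 2 * c := Real.sqrt_sq (by positivity)


lemma core (L : Submodule ℝ (EuclideanSpace ℝ (Fin D)))
    (g gd : EuclideanSpace ℝ (Fin D) →ₗ[ℝ] EuclideanSpace ℝ (Fin D))
    (hadj : ∀ x y, ⟪g x, y⟫ = ⟪x, gd y⟫)
    (hker : ∀ w ∈ Lᗮ, g w = 0)
    (hran : ∀ x, gd x ∈ L)
    (hg : g ≠ 0) :
    ∃ (t : ℝ) (Q : Matrix (Fin D) (Fin D) ℝ) (c : Fin D → EuclideanSpace ℝ (Fin D))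
      (s : Fin D → ℝ),
      0 < t ∧ Q.IsSymm ∧ Q.trace = 1 ∧ (∀ w ∈ Lᗮ, Matrix.toEuclideanLin Q w = 0) ∧
      (∀ y, ‖Matrix.toEuclideanLin Q y‖ = ‖g y‖ / t) ∧
      (∀ i, 0 ≤ s i) ∧ (∑ i, s i = t) ∧
      (∀ i, s i ≠ 0 → c i ∈ L ∧ ‖c i‖ = 1) ∧
      (∀ y, ‖g y‖ ≤ ∑ i, s i * |⟪c i, y⟫|) ∧
      |LinearMap.trace ℝ _ g| ≤ t := by
  classical
  set M : E →ₗ[ℝ] E := gd ∘ₗ g with hM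
  have hMg : ∀ x y : E, ⟪M x, y⟫ = ⟪g x, g y⟫ := by
    intro x y
    have h1 : ⟪gd (g x), y⟫ = ⟪g y, g x⟫ := by
      rw [real_inner_comm, ← hadj]
    simpa [hM, real_inner_comm (g y) (g x)] using h1
  have hMsym : M.IsSymmetric := by
    intro x y
    calc ⟪M x, y⟫ = ⟪g x, g y⟫ := hMg x y
      _ = ⟪g y, g x⟫ := real_inner_comm _ _
      _ = ⟪M y, x⟫ := (hMg y x).symm
      _ = ⟪x, M y⟫ := real_inner_comm _ _
  have hrk : finrank ℝ (EuclideanSpace ℝ (Fin D)) = D := finrank_euclideanSpace_fin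
  set b := hMsym.eigenvectorBasis hrk with hb
  set μ := hMsym.eigenvalues hrk with hμdef
  have hMb : ∀ i, M (b i) = μ i • b i := fun i => hMsym.apply_eigenvectorBasis hrk i
  have hbnorm : ∀ i, ‖b i‖ = 1 := fun i => b.orthonormal.1 i
  have hμval : ∀ i, μ i = ‖g (b i)‖ ^ 2 := by
    intro i
    have h1 : ⟪M (b i), b i⟫ = ‖g (b i)‖ ^ 2 := by
      rw [hMg]; exact real_inner_self_eq_norm_sq _
    rw [hMb i, real_inner_smul_left, real_inner_self_eq_norm_sq, hbnorm i] at h1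
    simpa using h1
  have hμnn : ∀ i, 0 ≤ μ i := fun i => (hμval i) ▸ sq_nonneg _
  set s : Fin D → ℝ := fun i => Real.sqrt (μ i) with hs
  have hsnn : ∀ i, 0 ≤ s i := fun i => Real.sqrt_nonneg _
  have hs2 : ∀ i, s i ^ 2 = μ i := fun i => Real.sq_sqrt (hμnn i)
  set t : ℝ := ∑ i, s i with ht
  -- t > 0
  have htpos : 0 < t := by
    have htnn : 0 ≤ t := Finset.sum_nonneg fun i _ => hsnn i
    rcases htnn.lt_or_eq with h | h
    · exact h
    exfalso
    have ht0 : t = 0 := h.symm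
    have hsum0 : ∑ i, s i = 0 := by rw [← ht]; exact ht0
    have hs0 : ∀ i, s i = 0 := fun i =>
      (Finset.sum_eq_zero_iff_of_nonneg (fun i _ => hsnn i)).mp hsum0 i (mem_univ i)
    have hgb : ∀ i, g (b i) = 0 := by
      intro i
      have hμ0 : μ i = 0 := by rw [← hs2 i, hs0 i]; ring
      have h2 : ‖g (b i)‖ ^ 2 = 0 := by rw [← hμval i, hμ0]
      have h3 : ‖g (b i)‖ = 0 := by nlinarith [norm_nonneg (g (b i))]
      exact norm_eq_zero.mp h3
    apply hg
    apply b.toBasis.ext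
    intro i
    simpa using hgb i
  -- eigenvectors with nonzero eigenvalue lie in L
  have hbL : ∀ i, s i ≠ 0 → b i ∈ L := by
    intro i hsi
    have hμi : μ i ≠ 0 := by
      intro h0
      apply hsi
      have hrfl : s i = Real.sqrt (μ i) := rfl
      rw [hrfl, h0, Real.sqrt_zero]
    have : b i = (μ i)⁻¹ • M (b i) := by
      rw [hMb i, smul_smul, inv_mul_cancel₀ hμi, one_smul]
    rw [this, hM]
    exact L.smul_mem _ (hran _)
  -- the operator R
  set R : E →ₗ[ℝ] E := ∑ i, s i • rankOne (b i) with hR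
  have hRapply : ∀ y : E, R y = ∑ i, (s i * ⟪b i, y⟫) • b i := by
    intro y
    rw [hR, LinearMap.sum_apply]
    refine Finset.sum_congr rfl fun i _ => ?_
    rw [LinearMap.smul_apply, rankOne_apply, smul_smul]
  have hinner_bR : ∀ (y : E) i, ⟪b i, R y⟫ = s i * ⟪b i, y⟫ := by
    intro y i
    rw [hRapply]
    rw [inner_sum]
    rw [Finset.sum_eq_single i]
    · rw [real_inner_smul_right, real_inner_self_eq_norm_sq, hbnorm i]; ring
    · intro j _ hji
      rw [real_inner_smul_right, orthonormal_iff_ite.mp b.orthonormal i j, if_neg (Ne.symm hji)]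
      ring
    · intro h; exact absurd (mem_univ i) h
  -- norms via repr
  have hnorm_sq : ∀ y : E, ‖y‖ ^ 2 = ∑ i, ⟪b i, y⟫ ^ 2 := by
    intro y
    have h0 : ‖y‖ = Real.sqrt (∑ i, ‖b.repr y i‖ ^ 2) := by
      rw [← b.repr.norm_map y]; exact EuclideanSpace.norm_eq _
    rw [h0, Real.sq_sqrt (by positivity)]
    refine Finset.sum_congr rfl fun i _ => ?_
    simp [b.repr_apply_apply, sq_abs]
  have hnormR : ∀ y : E, ‖R y‖ = ‖g y‖ := by
    intro y
    have h1 : ‖R y‖ ^ 2 = ∑ i, μ i * ⟪b i, y⟫ ^ 2 := by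
      rw [hnorm_sq]
      refine Finset.sum_congr rfl fun i _ => ?_
      rw [hinner_bR, mul_pow, hs2]
    have h2 : ‖g y‖ ^ 2 = ∑ i, μ i * ⟪b i, y⟫ ^ 2 := by
      have h3 : ‖g y‖ ^ 2 = ⟪M y, y⟫ := by rw [hMg]; exact (real_inner_self_eq_norm_sq _).symm
      have h4 : ⟪M y, y⟫ = ∑ i, ⟪b i, M y⟫ * ⟪b i, y⟫ := by
        rw [← b.repr.inner_map_map (M y) y, PiLp.inner_apply]
        refine Finset.sum_congr rfl fun i _ => ?_
        rw [b.repr_apply_apply, b.repr_apply_apply]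
        simp [RCLike.inner_apply]
        ring
      rw [h3, h4]
      refine Finset.sum_congr rfl fun i _ => ?_
      have : ⟪b i, M y⟫ = μ i * ⟪b i, y⟫ := by
        rw [← hMsym (b i) y, hMb i, real_inner_smul_left]
      rw [this]; ring
    have := h1.trans h2.symm
    nlinarith [norm_nonneg (R y), norm_nonneg (g y)]
  refine ⟨t, Matrix.toEuclideanLin.symm (t⁻¹ • R), b, s, htpos, ?_, ?_, ?_, ?_, hsnn, rfl, ?_, ?_, ?_⟩
  · rw [symm_bridge, LinearEquiv.apply_symm_apply]
    intro x y
    rw [LinearMap.smul_apply, LinearMap.smul_apply, real_inner_smul_left,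
      real_inner_smul_right]
    congr 1
    rw [hR, LinearMap.sum_apply, LinearMap.sum_apply, sum_inner, inner_sum]
    refine Finset.sum_congr rfl fun i _ => ?_
    rw [LinearMap.smul_apply, LinearMap.smul_apply, real_inner_smul_left,
      real_inner_smul_right, rankOne_symm]
  · rw [← trace_bridge, LinearEquiv.apply_symm_apply, _root_.map_smul, hR, map_sum]
    have : ∀ i ∈ (univ : Finset (Fin D)), LinearMap.trace ℝ (EuclideanSpace ℝ (Fin D)) (s i • rankOne (b i)) = s i := by
      intro i _
      rw [_root_.map_smul, trace_rankOne, hbnorm i]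
      simp
    rw [Finset.sum_congr rfl this]
    simp [smul_eq_mul, inv_mul_cancel₀ (ne_of_gt htpos)]
    exact inv_mul_cancel₀ (ne_of_gt htpos)
  · intro w hw
    rw [LinearEquiv.apply_symm_apply]
    have : R w = 0 := by
      rw [hRapply]
      apply Finset.sum_eq_zero
      intro i _
      by_cases hsi : s i = 0
      · rw [hsi]; simp
      · rw [Submodule.inner_right_of_mem_orthogonal (hbL i hsi) hw, mul_zero, zero_smul]
    simp [this]
  · intro y
    rw [LinearEquiv.apply_symm_apply]
    simp only [LinearMap.smul_apply, norm_smul, Real.norm_eq_abs,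
      abs_of_pos (inv_pos.mpr htpos), hnormR]
    rw [div_eq_inv_mul]
  · intro i hsi; exact ⟨hbL i hsi, hbnorm i⟩
  · intro y
    rw [← hnormR]
    have h1 : ‖R y‖ ^ 2 = ∑ i, (s i * ⟪b i, y⟫) ^ 2 := by
      rw [hnorm_sq]
      refine Finset.sum_congr rfl fun i _ => ?_
      rw [hinner_bR]
    have h2 : ∑ i, (s i * ⟪b i, y⟫) ^ 2 ≤ (∑ i, |s i * ⟪b i, y⟫|) ^ 2 :=
      sum_sq_le_sq_sum_abs _
    have h3 : ∑ i, |s i * ⟪b i, y⟫| = ∑ i, s i * |⟪b i, y⟫| := by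
      refine Finset.sum_congr rfl fun i _ => ?_
      rw [abs_mul, abs_of_nonneg (hsnn i)]
    calc ‖R y‖ = Real.sqrt (‖R y‖ ^ 2) := (Real.sqrt_sq (norm_nonneg _)).symm
      _ ≤ Real.sqrt ((∑ i, |s i * ⟪b i, y⟫|) ^ 2) := Real.sqrt_le_sqrt (by rw [h1]; exact h2)
      _ = ∑ i, |s i * ⟪b i, y⟫| := Real.sqrt_sq (Finset.sum_nonneg fun i _ => abs_nonneg _)
      _ = ∑ i, s i * |⟪b i, y⟫| := h3
  · rw [trace_eq_sum_inner b g]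
    calc |∑ i, ⟪b i, g (b i)⟫| ≤ ∑ i, |⟪b i, g (b i)⟫| := Finset.abs_sum_le_sum_abs _ _
      _ ≤ ∑ i, s i := by
        apply Finset.sum_le_sum
        intro i _
        calc |⟪b i, g (b i)⟫| ≤ ‖b i‖ * ‖g (b i)‖ := abs_real_inner_le_norm _ _
          _ = ‖g (b i)‖ := by rw [hbnorm i, one_mul]
          _ = s i := by
            have hrfl : s i = Real.sqrt (μ i) := rfl
            rw [hrfl, hμval i, Real.sqrt_sq (norm_nonneg _)]


end Stmt16Aux

open Stmt16Aux

set_option maxHeartbeats 1000000 in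
/-- Exact recovery (Theorem 1, second part): under conditions (C1) and (C2), any minimizer
`Q̂` of `F(Q) = Σ_{x∈X}‖Qx‖` over `H = {Q : Q = Qᵀ, tr Q = 1}` satisfies `ker Q̂ ⊇ L*`. -/
theorem stmt16 {D d N : ℕ} (hdD : d < D)
    (L : Submodule ℝ (EuclideanSpace ℝ (Fin D))) (hL : finrank ℝ L = d)
    (x : Fin N → EuclideanSpace ℝ (Fin D))
    -- condition (C1): min over Q exceeds √2 · min over unit v ∈ L*⊥, i.e. there is a
    -- unit vector v ∈ L*⊥ realizing the minimum with the strict inequality for all Q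
    (hC1 : ∃ v : EuclideanSpace ℝ (Fin D), v ∈ Lᗮ ∧ ‖v‖ = 1 ∧
      ∀ Q : Matrix (Fin D) (Fin D) ℝ, Q.IsSymm → Q.trace = 1 →
        (∀ w ∈ Lᗮ, Matrix.toEuclideanLin Q w = 0) →
        Real.sqrt 2 * ∑ i ∈ Finset.univ.filter (fun i => x i ∉ L), |⟪v, x i⟫| <
          ∑ i ∈ Finset.univ.filter (fun i => x i ∈ L), ‖Matrix.toEuclideanLin Q (x i)‖)
    -- condition (C2): min over Q exceeds √2 · max over unit v ∈ L*
    (hC2 : ∀ Q : Matrix (Fin D) (Fin D) ℝ, Q.IsSymm → Q.trace = 1 →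
      (∀ w ∈ Lᗮ, Matrix.toEuclideanLin Q w = 0) →
      ∀ v : EuclideanSpace ℝ (Fin D), v ∈ L → ‖v‖ = 1 →
        Real.sqrt 2 * ∑ i ∈ Finset.univ.filter (fun i => x i ∉ L), |⟪v, x i⟫| <
          ∑ i ∈ Finset.univ.filter (fun i => x i ∈ L), ‖Matrix.toEuclideanLin Q (x i)‖)
    (Qh : Matrix (Fin D) (Fin D) ℝ) (hQsym : Qh.IsSymm) (hQtr : Qh.trace = 1)
    (hmin : ∀ Q : Matrix (Fin D) (Fin D) ℝ, Q.IsSymm → Q.trace = 1 →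
      ∑ i, ‖Matrix.toEuclideanLin Qh (x i)‖ ≤ ∑ i, ‖Matrix.toEuclideanLin Q (x i)‖) :
    ∀ v ∈ L, Matrix.toEuclideanLin Qh v = 0 := by
  classical
  obtain ⟨v, hvL, hvnorm, hC1'⟩ := hC1
  set T := Matrix.toEuclideanLin Qh with hT
  have hTsym : T.IsSymmetric := (symm_bridge Qh).mp hQsym
  set Pl : EuclideanSpace ℝ (Fin D) →ₗ[ℝ] EuclideanSpace ℝ (Fin D) :=
    L.subtype ∘ₗ (Submodule.orthogonalProjectionOnto L).toLinearMap with hPl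
  set Po : EuclideanSpace ℝ (Fin D) →ₗ[ℝ] EuclideanSpace ℝ (Fin D) :=
    Lᗮ.subtype ∘ₗ (Submodule.orthogonalProjectionOnto Lᗮ).toLinearMap with hPo
  have hPl_mem : ∀ y, Pl y ∈ L := fun y => (Submodule.orthogonalProjectionOnto L y).2
  have hPo_mem : ∀ y, Po y ∈ Lᗮ := fun y => (Submodule.orthogonalProjectionOnto Lᗮ y).2
  have hadd : ∀ y, Pl y + Po y = y := fun y =>
    Submodule.starProjection_add_starProjection_orthogonal (K := L) y
  have hPl_id : ∀ y ∈ L, Pl y = y := fun y hy => Submodule.starProjection_eq_self_iff.mpr hy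
  have hPl_zero : ∀ y ∈ Lᗮ, Pl y = 0 := by
    intro y hy
    have h := Submodule.orthogonalProjectionOnto_apply_of_mem_orthogonal hy
    show (↑(Submodule.orthogonalProjectionOnto L y) : EuclideanSpace ℝ (Fin D)) = 0
    rw [h]; rfl
  have hPo_id : ∀ y ∈ Lᗮ, Po y = y := fun y hy => Submodule.starProjection_eq_self_iff.mpr hy
  have hPo_zero : ∀ y ∈ L, Po y = 0 := by
    intro y hy
    have h := Submodule.orthogonalProjectionOnto_apply_of_mem_orthogonal
      (Submodule.le_orthogonal_orthogonal L hy)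
    show (↑(Submodule.orthogonalProjectionOnto Lᗮ y) : EuclideanSpace ℝ (Fin D)) = 0
    rw [h]; rfl
  have hPl_sym : ∀ a c : EuclideanSpace ℝ (Fin D), ⟪Pl a, c⟫ = ⟪a, Pl c⟫ := fun a c =>
    Submodule.inner_starProjection_left_eq_right L a c
  have hPo_sym : ∀ a c : EuclideanSpace ℝ (Fin D), ⟪Po a, c⟫ = ⟪a, Po c⟫ := fun a c =>
    Submodule.inner_starProjection_left_eq_right Lᗮ a c
  have hPo_norm : ∀ y, ‖Po y‖ ≤ ‖y‖ := by
    intro y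
    have hperp : ⟪Pl y, Po y⟫ = 0 :=
      Submodule.inner_right_of_mem_orthogonal (hPl_mem y) (hPo_mem y)
    have hsq : ‖y‖ ^ 2 = ‖Pl y‖ ^ 2 + ‖Po y‖ ^ 2 := by
      conv_lhs => rw [← hadd y]
      rw [norm_add_sq_real, hperp]
      ring
    nlinarith [norm_nonneg (Pl y), norm_nonneg (Po y), norm_nonneg y]
  set A : EuclideanSpace ℝ (Fin D) →ₗ[ℝ] EuclideanSpace ℝ (Fin D) := Pl ∘ₗ T ∘ₗ Pl with hA
  set Bt : EuclideanSpace ℝ (Fin D) →ₗ[ℝ] EuclideanSpace ℝ (Fin D) := Po ∘ₗ T ∘ₗ Pl with hB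
  have hA_apply : ∀ y, A y = Pl (T (Pl y)) := fun y => rfl
  have hB_apply : ∀ y, Bt y = Po (T (Pl y)) := fun y => rfl
  suffices hfin : A = 0 ∧ Bt = 0 by
    intro u hu
    have h1 : T u = Pl (T u) + Po (T u) := (hadd _).symm
    have h2 : Pl (T u) = A u := by rw [hA_apply, hPl_id u hu]
    have h3 : Po (T u) = Bt u := by rw [hB_apply, hPl_id u hu]
    show T u = 0
    rw [h1, h2, h3, hfin.1, hfin.2]
    simp
  by_contra hcon
  rw [not_and_or] at hcon
  have hAB : A ≠ 0 ∨ Bt ≠ 0 := hcon.imp (fun h => h) (fun h => h)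
  clear hcon
  set inl : Finset (Fin N) := univ.filter (fun i => x i ∈ L) with hinl
  set out : Finset (Fin N) := univ.filter (fun i => x i ∉ L) with hout
  set Sv : ℝ := ∑ i ∈ out, |⟪v, x i⟫| with hSv
  set SB : ℝ := ∑ i ∈ out, ‖Bt (x i)‖ with hSB
  set InA : ℝ := ∑ i ∈ inl, ‖A (x i)‖ with hInA
  set InB : ℝ := ∑ i ∈ inl, ‖Bt (x i)‖ with hInB
  set InT : ℝ := ∑ i ∈ inl, ‖T (x i)‖ with hInT
  set OutT : ℝ := ∑ i ∈ out, ‖T (x i)‖ with hOutT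
  set τ : ℝ := LinearMap.trace ℝ (EuclideanSpace ℝ (Fin D)) A with hτ
  have hSv_nn : 0 ≤ Sv := Finset.sum_nonneg fun i _ => abs_nonneg _
  have hsqrt2 : (0:ℝ) < Real.sqrt 2 := by positivity
  -- A part
  have hApart : Real.sqrt 2 * (|τ| * Sv) ≤ InA ∧
      (A ≠ 0 → Real.sqrt 2 * (|τ| * Sv) < InA) := by
    by_cases hA0 : A = 0
    · have hτ0 : τ = 0 := by rw [hτ, hA0, map_zero]
      constructor
      · rw [hτ0]
        simp only [abs_zero, zero_mul, mul_zero]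
        exact Finset.sum_nonneg fun i _ => norm_nonneg _
      · intro h; exact absurd hA0 h
    · have hAsym : ∀ a c : EuclideanSpace ℝ (Fin D), ⟪A a, c⟫ = ⟪a, A c⟫ := by
        intro a c
        rw [hA_apply, hA_apply, hPl_sym, hTsym (Pl a) (Pl c), hPl_sym]
      have hAker : ∀ w ∈ Lᗮ, A w = 0 := by
        intro w hw
        rw [hA_apply, hPl_zero w hw, map_zero, map_zero]
      have hAran : ∀ y, A y ∈ L := fun y => hPl_mem _
      obtain ⟨t, Q, c, s, ht, hQs, hQt, hQk, hQn, hsnn, hst, hcL, hgb, htr⟩ :=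
        core L A A hAsym hAker hAran hA0
      have hmain := hC1' Q hQs hQt hQk
      have hrhs : ∑ i ∈ inl, ‖Matrix.toEuclideanLin Q (x i)‖ = InA / t := by
        rw [hInA, Finset.sum_div]
        exact Finset.sum_congr rfl fun i _ => hQn (x i)
      rw [hrhs] at hmain
      have hstep : Real.sqrt 2 * (|τ| * Sv) ≤ Real.sqrt 2 * (t * Sv) :=
        mul_le_mul_of_nonneg_left (mul_le_mul_of_nonneg_right htr hSv_nn) hsqrt2.le
      have hstep2 : Real.sqrt 2 * (t * Sv) < InA := by
        have h2 : t * (Real.sqrt 2 * Sv) < t * (InA / t) :=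
          mul_lt_mul_of_pos_left hmain ht
        rw [mul_div_cancel₀ _ (ne_of_gt ht)] at h2
        nlinarith [h2]
      refine ⟨(hstep.trans_lt hstep2).le, fun _ => hstep.trans_lt hstep2⟩
  -- B part
  have hBpart : Real.sqrt 2 * SB ≤ InB ∧ (Bt ≠ 0 → Real.sqrt 2 * SB < InB) := by
    by_cases hB0 : Bt = 0
    · have hSB0 : SB = 0 := by
        rw [hSB]; apply Finset.sum_eq_zero; intro i _; rw [hB0]; simp
      constructor
      · rw [hSB0, mul_zero]
        exact Finset.sum_nonneg fun i _ => norm_nonneg _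
      · intro h; exact absurd hB0 h
    · set Btd : EuclideanSpace ℝ (Fin D) →ₗ[ℝ] EuclideanSpace ℝ (Fin D) :=
        Pl ∘ₗ T ∘ₗ Po with hBtd
      have hadjB : ∀ a c : EuclideanSpace ℝ (Fin D), ⟪Bt a, c⟫ = ⟪a, Btd c⟫ := by
        intro a c
        show ⟪Po (T (Pl a)), c⟫ = ⟪a, Pl (T (Po c))⟫
        rw [hPo_sym, hTsym (Pl a) (Po c), hPl_sym]
      have hkerB : ∀ w ∈ Lᗮ, Bt w = 0 := by
        intro w hw
        rw [hB_apply, hPl_zero w hw, map_zero, map_zero]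
      have hranB : ∀ y, Btd y ∈ L := fun y => hPl_mem _
      obtain ⟨t, Q, c, s, ht, hQs, hQt, hQk, hQn, hsnn, hst, hcL, hgb, _⟩ :=
        core L Bt Btd hadjB hkerB hranB hB0
      have hrhs : ∑ i ∈ inl, ‖Matrix.toEuclideanLin Q (x i)‖ = InB / t := by
        rw [hInB, Finset.sum_div]
        exact Finset.sum_congr rfl fun i _ => hQn (x i)
      have hout_bound : SB ≤ ∑ j, s j * (∑ i ∈ out, |⟪c j, x i⟫|) := by
        calc SB ≤ ∑ i ∈ out, ∑ j, s j * |⟪c j, x i⟫| :=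
              Finset.sum_le_sum fun i _ => hgb (x i)
          _ = ∑ j, s j * (∑ i ∈ out, |⟪c j, x i⟫|) := by
              rw [Finset.sum_comm]
              exact Finset.sum_congr rfl fun j _ => (Finset.mul_sum _ _ _).symm
      have hkey : ∀ j, s j * (Real.sqrt 2 * ∑ i ∈ out, |⟪c j, x i⟫|) ≤ s j * (InB / t) := by
        intro j
        by_cases hsj : s j = 0
        · rw [hsj, zero_mul, zero_mul]
        · refine mul_le_mul_of_nonneg_left ?_ (hsnn j)
          have := hC2 Q hQs hQt hQk (c j) (hcL j hsj).1 (hcL j hsj).2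
          rw [hrhs] at this
          exact this.le
      obtain ⟨j0, hj0⟩ : ∃ j0 : Fin D, s j0 ≠ 0 := by
        by_contra hno
        push_neg at hno
        have : t = 0 := by rw [← hst]; exact Finset.sum_eq_zero fun j _ => hno j
        exact absurd this (ne_of_gt ht)
      have hkey0 : s j0 * (Real.sqrt 2 * ∑ i ∈ out, |⟪c j0, x i⟫|) < s j0 * (InB / t) := by
        refine mul_lt_mul_of_pos_left ?_ (lt_of_le_of_ne (hsnn j0) (Ne.symm hj0))
        have := hC2 Q hQs hQt hQk (c j0) (hcL j0 hj0).1 (hcL j0 hj0).2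
        rw [hrhs] at this
        exact this
      have hsum_lt : ∑ j, s j * (Real.sqrt 2 * ∑ i ∈ out, |⟪c j, x i⟫|) <
          ∑ j, s j * (InB / t) :=
        Finset.sum_lt_sum (fun j _ => hkey j) ⟨j0, Finset.mem_univ j0, hkey0⟩
      have hrhs2 : ∑ j, s j * (InB / t) = InB := by
        rw [← Finset.sum_mul, hst, mul_div_cancel₀ _ (ne_of_gt ht)]
      have hlhs2 : ∑ j, s j * (Real.sqrt 2 * ∑ i ∈ out, |⟪c j, x i⟫|) =
          Real.sqrt 2 * ∑ j, s j * (∑ i ∈ out, |⟪c j, x i⟫|) := by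
        rw [Finset.mul_sum]
        exact Finset.sum_congr rfl fun j _ => by ring
      have hfinalB : Real.sqrt 2 * SB < InB := by
        have h1 : Real.sqrt 2 * SB ≤ Real.sqrt 2 * ∑ j, s j * (∑ i ∈ out, |⟪c j, x i⟫|) :=
          mul_le_mul_of_nonneg_left hout_bound hsqrt2.le
        rw [← hlhs2] at h1
        calc Real.sqrt 2 * SB ≤ _ := h1
          _ < ∑ j, s j * (InB / t) := hsum_lt
          _ = InB := hrhs2
      exact ⟨hfinalB.le, fun _ => hfinalB⟩
  -- combine
  have hcomb : |τ| * Sv + SB < InT := by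
    have h1 : Real.sqrt 2 * (|τ| * Sv + SB) < InA + InB := by
      rcases hAB with h | h
      · have ha := hApart.2 h
        have hb := hBpart.1
        nlinarith
      · have ha := hApart.1
        have hb := hBpart.2 h
        nlinarith
    have h2 : InA + InB ≤ Real.sqrt 2 * InT := by
      rw [hInA, hInB, hInT, ← Finset.sum_add_distrib, Finset.mul_sum]
      refine Finset.sum_le_sum fun i hi => ?_
      have hxi : x i ∈ L := by
        rw [hinl] at hi
        exact (Finset.mem_filter.mp hi).2
      have hAx : A (x i) = Pl (T (x i)) := by rw [hA_apply, hPl_id _ hxi]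
      have hBx : Bt (x i) = Po (T (x i)) := by rw [hB_apply, hPl_id _ hxi]
      have hperp : ⟪Pl (T (x i)), Po (T (x i))⟫ = 0 :=
        Submodule.inner_right_of_mem_orthogonal (hPl_mem _) (hPo_mem _)
      have hsq : ‖Pl (T (x i))‖ ^ 2 + ‖Po (T (x i))‖ ^ 2 = ‖T (x i)‖ ^ 2 := by
        conv_rhs => rw [← hadd (T (x i))]
        rw [norm_add_sq_real, hperp]
        ring
      rw [hAx, hBx]
      exact le_sqrt_two_mul (norm_nonneg _) (norm_nonneg _) (norm_nonneg _) hsq.le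
    nlinarith
  -- competitor
  set f' : EuclideanSpace ℝ (Fin D) →ₗ[ℝ] EuclideanSpace ℝ (Fin D) :=
    (Po ∘ₗ T ∘ₗ Po) + τ • rankOne v with hf'
  set Q' : Matrix (Fin D) (Fin D) ℝ := Matrix.toEuclideanLin.symm f' with hQ'def
  have hQ'app : Matrix.toEuclideanLin Q' = f' := by
    rw [hQ'def]; exact LinearEquiv.apply_symm_apply _ _
  have hQ's : Q'.IsSymm := by
    rw [symm_bridge, hQ'app]
    intro a c
    simp only [hf', LinearMap.add_apply, LinearMap.smul_apply, LinearMap.comp_apply,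
      inner_add_left, inner_add_right, real_inner_smul_left, real_inner_smul_right]
    have h1 : ⟪Po (T (Po a)), c⟫ = ⟪a, Po (T (Po c))⟫ := by
      rw [hPo_sym, hTsym (Po a) (Po c), hPo_sym]
    rw [h1, rankOne_symm v a c]
  have hPoPo : Po ∘ₗ Po = Po := LinearMap.ext fun y => hPo_id _ (hPo_mem y)
  have hPlPl : Pl ∘ₗ Pl = Pl := LinearMap.ext fun y => hPl_id _ (hPl_mem y)
  have hQ't : Q'.trace = 1 := by
    rw [← trace_bridge, hQ'app, hf', map_add, _root_.map_smul, trace_rankOne, hvnorm]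
    have e1 : LinearMap.trace ℝ _ (Po ∘ₗ T ∘ₗ Po) = LinearMap.trace ℝ _ (T ∘ₗ Po) := by
      rw [← Module.End.mul_eq_comp, ← Module.End.mul_eq_comp, LinearMap.trace_mul_comm,
        Module.End.mul_eq_comp, Module.End.mul_eq_comp, LinearMap.comp_assoc, hPoPo]
    have e2 : τ = LinearMap.trace ℝ _ (T ∘ₗ Pl) := by
      rw [hτ, hA, ← Module.End.mul_eq_comp, ← Module.End.mul_eq_comp, LinearMap.trace_mul_comm,
        Module.End.mul_eq_comp, Module.End.mul_eq_comp, LinearMap.comp_assoc, hPlPl]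
    have e3 : (T ∘ₗ Po) + (T ∘ₗ Pl) = T := by
      apply LinearMap.ext
      intro y
      simp only [LinearMap.add_apply, LinearMap.comp_apply]
      rw [← map_add, add_comm (Po y) (Pl y), hadd]
    have e4 : LinearMap.trace ℝ _ (T ∘ₗ Po) + τ = 1 := by
      rw [e2, ← map_add, e3, hT, trace_bridge, hQtr]
    rw [e1]
    simp only [smul_eq_mul, one_pow, mul_one]
    exact e4
  have hminQ := hmin Q' hQ's hQ't
  rw [hQ'app] at hminQ
  have hsplitT : ∑ i, ‖T (x i)‖ = InT + OutT := by
    rw [hInT, hOutT, hinl, hout]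
    exact (Finset.sum_filter_add_sum_filter_not univ _ _).symm
  have hsplitF : ∑ i, ‖f' (x i)‖ = ∑ i ∈ inl, ‖f' (x i)‖ + ∑ i ∈ out, ‖f' (x i)‖ := by
    rw [hinl, hout]
    exact (Finset.sum_filter_add_sum_filter_not univ _ _).symm
  have hin0 : ∑ i ∈ inl, ‖f' (x i)‖ = 0 := by
    apply Finset.sum_eq_zero
    intro i hi
    have hxi : x i ∈ L := by
      rw [hinl] at hi
      exact (Finset.mem_filter.mp hi).2
    have h1 : Po (x i) = 0 := hPo_zero _ hxi
    have h2 : ⟪v, x i⟫ = 0 := Submodule.inner_left_of_mem_orthogonal hxi hvL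
    simp only [hf', LinearMap.add_apply, LinearMap.comp_apply, LinearMap.smul_apply,
      rankOne_apply, h1, h2, map_zero, zero_smul, smul_zero, add_zero, norm_zero]
  have hout_b : ∀ i ∈ out, ‖f' (x i)‖ ≤ ‖T (x i)‖ + (|τ| * |⟪v, x i⟫| + ‖Bt (x i)‖) := by
    intro i _
    have hdecomp : f' (x i) = (Po (T (x i)) - Bt (x i)) + τ • (⟪v, x i⟫ • v) := by
      simp only [hf', LinearMap.add_apply, LinearMap.comp_apply, LinearMap.smul_apply,
        rankOne_apply]
      congr 1
      have hy : Po (x i) = x i - Pl (x i) := by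
        rw [eq_sub_iff_add_eq, add_comm]
        exact hadd (x i)
      rw [hy, map_sub, map_sub, hB_apply]
    rw [hdecomp]
    calc ‖(Po (T (x i)) - Bt (x i)) + τ • (⟪v, x i⟫ • v)‖
        ≤ ‖Po (T (x i)) - Bt (x i)‖ + ‖τ • (⟪v, x i⟫ • v)‖ := norm_add_le _ _
      _ ≤ (‖Po (T (x i))‖ + ‖Bt (x i)‖) + ‖τ • (⟪v, x i⟫ • v)‖ := by
          have := norm_sub_le (Po (T (x i))) (Bt (x i))
          linarith
      _ ≤ ‖T (x i)‖ + (|τ| * |⟪v, x i⟫| + ‖Bt (x i)‖) := by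
          have h1 : ‖τ • (⟪v, x i⟫ • v)‖ = |τ| * |⟪v, x i⟫| := by
            rw [norm_smul, norm_smul, hvnorm, Real.norm_eq_abs, Real.norm_eq_abs, mul_one]
          rw [h1]
          have := hPo_norm (T (x i))
          linarith
  have hout_sum : ∑ i ∈ out, ‖f' (x i)‖ ≤ OutT + (|τ| * Sv + SB) := by
    calc ∑ i ∈ out, ‖f' (x i)‖
        ≤ ∑ i ∈ out, (‖T (x i)‖ + (|τ| * |⟪v, x i⟫| + ‖Bt (x i)‖)) :=
          Finset.sum_le_sum hout_b
      _ = OutT + (|τ| * Sv + SB) := by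
          rw [Finset.sum_add_distrib, Finset.sum_add_distrib, hOutT, hSB, hSv, ← Finset.mul_sum]
  rw [hsplitT, hsplitF, hin0] at hminQ
  linarith
end

section
/- Let Q ∈ ℝ^{D×D} satisfy Q P_{L⊥} = 0 for a subspace L, and let Q = UΣVᵀ be its SVD. Then Q' := VΣVᵀ/tr(Σ) is symmetric positive semidefinite with trace 1, satisfies Q' P_{L⊥} = 0, and ‖Q' x‖ = ‖Q x‖/tr(Σ) for all x ∈ ℝ^D. -/
open Matrix Finset

lemma norm_toEuclideanLin_eq {D : ℕ} (A : Matrix (Fin D) (Fin D) ℝ)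
    (y : EuclideanSpace ℝ (Fin D)) :
    ‖Matrix.toEuclideanLin A y‖ =
      Real.sqrt ((A *ᵥ (WithLp.equiv 2 (Fin D → ℝ) y)) ⬝ᵥ (A *ᵥ (WithLp.equiv 2 (Fin D → ℝ) y))) := by
  rw [Matrix.toEuclideanLin_apply, EuclideanSpace.norm_eq]
  congr 1
  refine Finset.sum_congr rfl fun i _ => ?_
  simp [Real.norm_eq_abs, sq_abs, pow_two]

lemma dotProduct_self_mulVec {D : ℕ} (A : Matrix (Fin D) (Fin D) ℝ) (x : Fin D → ℝ) :
    (A *ᵥ x) ⬝ᵥ (A *ᵥ x) = x ⬝ᵥ ((Aᵀ * A) *ᵥ x) := by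
  rw [Matrix.dotProduct_mulVec, ← Matrix.mulVec_transpose, Matrix.mulVec_mulVec,
    dotProduct_comm]

/-- Symmetrization lemma: if `Q P_{L⊥} = 0` (i.e. `Q` kills `L⊥`) and `Q = U Σ Vᵀ` is an
SVD, then `Q' = V Σ Vᵀ / tr Σ` is symmetric PSD with trace one, kills `L⊥`, and
`‖Q' y‖ = ‖Q y‖ / tr Σ` for all `y`. -/
theorem stmt17 {D : ℕ} (L : Submodule ℝ (EuclideanSpace ℝ (Fin D)))
    (Q U V : Matrix (Fin D) (Fin D) ℝ) (σ : Fin D → ℝ)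
    (hU : Uᵀ * U = 1) (hV : Vᵀ * V = 1) (hσ : ∀ i, 0 ≤ σ i)
    (hSVD : Q = U * Matrix.diagonal σ * Vᵀ) (hQ0 : Q ≠ 0)
    (hker : ∀ w ∈ Lᗮ, Matrix.toEuclideanLin Q w = 0) :
    ((∑ i, σ i)⁻¹ • (V * Matrix.diagonal σ * Vᵀ)).IsSymm ∧
    ((∑ i, σ i)⁻¹ • (V * Matrix.diagonal σ * Vᵀ)).PosSemidef ∧
    ((∑ i, σ i)⁻¹ • (V * Matrix.diagonal σ * Vᵀ)).trace = 1 ∧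
    (∀ w ∈ Lᗮ, Matrix.toEuclideanLin ((∑ i, σ i)⁻¹ • (V * Matrix.diagonal σ * Vᵀ)) w = 0) ∧
    ∀ y : EuclideanSpace ℝ (Fin D),
      ‖Matrix.toEuclideanLin ((∑ i, σ i)⁻¹ • (V * Matrix.diagonal σ * Vᵀ)) y‖ =
        ‖Matrix.toEuclideanLin Q y‖ / (∑ i, σ i) := by
  set M : Matrix (Fin D) (Fin D) ℝ := V * Matrix.diagonal σ * Vᵀ with hM
  set s : ℝ := ∑ i, σ i with hs
  -- positivity of s
  have hs0 : 0 < s := by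
    rcases lt_or_eq_of_le (Finset.sum_nonneg fun i _ => hσ i) with h | h
    · exact h
    · exfalso
      apply hQ0
      have hall : ∀ i ∈ Finset.univ, σ i = 0 :=
        (Finset.sum_eq_zero_iff_of_nonneg fun i _ => hσ i).mp h.symm
      have : Matrix.diagonal σ = 0 := by
        ext i j
        by_cases hij : i = j <;> simp [Matrix.diagonal, hij, hall j (Finset.mem_univ j)]
      rw [hSVD, this, Matrix.mul_zero, Matrix.zero_mul]
  -- M is symmetric
  have hMsym : M.IsSymm := by
    unfold Matrix.IsSymm
    rw [hM]
    simp [Matrix.transpose_mul, Matrix.diagonal_transpose, Matrix.mul_assoc]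
  -- QᵀQ = MᵀM
  have hQQ : Qᵀ * Q = Mᵀ * M := by
    rw [hSVD, hM]
    simp only [Matrix.transpose_mul, Matrix.transpose_transpose, Matrix.diagonal_transpose,
      Matrix.mul_assoc]
    rw [← Matrix.mul_assoc Uᵀ U, hU, Matrix.one_mul,
      ← Matrix.mul_assoc Vᵀ V, hV, Matrix.one_mul]
  -- norms via M and Q agree
  have hnorm : ∀ y : EuclideanSpace ℝ (Fin D),
      ‖Matrix.toEuclideanLin M y‖ = ‖Matrix.toEuclideanLin Q y‖ := by
    intro y
    rw [norm_toEuclideanLin_eq, norm_toEuclideanLin_eq,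
      dotProduct_self_mulVec, dotProduct_self_mulVec, hQQ]
  -- linearity in the matrix
  have hsmul : ∀ y : EuclideanSpace ℝ (Fin D),
      Matrix.toEuclideanLin (s⁻¹ • M) y = s⁻¹ • Matrix.toEuclideanLin M y := by
    intro y
    rw [_root_.map_smul]
    rfl
  have hnorm' : ∀ y : EuclideanSpace ℝ (Fin D),
      ‖Matrix.toEuclideanLin (s⁻¹ • M) y‖ = ‖Matrix.toEuclideanLin Q y‖ / s := by
    intro y
    rw [hsmul, norm_smul, hnorm, Real.norm_eq_abs, abs_of_nonneg (inv_nonneg.mpr hs0.le),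
      div_eq_inv_mul]
  refine ⟨?_, ?_, ?_, ?_, hnorm'⟩
  · -- symmetry
    unfold Matrix.IsSymm
    rw [Matrix.transpose_smul, hMsym]
  · -- PSD
    have hMpsd : M.PosSemidef := by
      have := (Matrix.PosSemidef.diagonal (fun i => hσ i)).mul_mul_conjTranspose_same V
      rwa [Matrix.conjTranspose_eq_transpose_of_trivial] at this
    constructor
    · show (s⁻¹ • M)ᴴ = s⁻¹ • M
      rw [Matrix.conjTranspose_smul, star_trivial, hMpsd.1.eq]
    · intro x
      have e : (x.sum fun i xi => x.sum fun j xj => star xi * (s⁻¹ • M) i j * xj) =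
          s⁻¹ * (x.sum fun i xi => x.sum fun j xj => star xi * M i j * xj) := by
        simp only [Finsupp.sum, Finset.mul_sum, Matrix.smul_apply, smul_eq_mul]
        exact Finset.sum_congr rfl fun i _ => Finset.sum_congr rfl fun j _ => by ring
      rw [e]
      exact mul_nonneg (inv_nonneg.mpr hs0.le) (hMpsd.2 x)
  · -- trace
    rw [Matrix.trace_smul, Matrix.trace_mul_cycle, hV, Matrix.one_mul,
      Matrix.trace_diagonal, smul_eq_mul, ← hs, inv_mul_cancel₀ hs0.ne']
  · -- kernel
    intro w hw
    have h0 : ‖Matrix.toEuclideanLin (s⁻¹ • M) w‖ = 0 := by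
      rw [hnorm' w, hker w hw, norm_zero, zero_div]
    exact norm_eq_zero.mp h0
end
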